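/- arXiv:1411.1893 — 2 statements merged into one kernel-verified Lean document; each statement's English description precedes it below -/
import Mathlib

section
/- Fix a > 0, δ > 0, N ∈ ℕ. Suppose v : [−1,∞) → [0,∞) is continuous and satisfies, for each k ∈ {1,…,N+2} and t ∈ [k−1,k], the recursion v(t) ≤ ā v(k−1) + ā N δ ∫_{k−1}^{t} v(τ−1) dτ where ā ≥ 1, together with v(t) ≤ ā v(0) + ā N δ ∫₀¹ v(τ−1) dτ on [0,1]. Then for all k ∈ {1,…,N+2} and t ∈ [k−1,k], v(t) ≤ ā^k (1+Nδ)^{k−1} v(0) + ā^k N δ (1+Nδ)^{k−1} ∫₀¹ v(τ−1) dτ. -/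
open Set

theorem stmt12 (a δ : ℝ) (ha : 0 < a) (hδ : 0 < δ) (N : ℕ)
    (abar : ℝ) (habar : 1 ≤ abar)
    (v : ℝ → ℝ) (hv : Continuous v) (hv0 : ∀ t : ℝ, 0 ≤ v t)
    (hrec : ∀ k : ℕ, 1 ≤ k → k ≤ N + 2 → ∀ t ∈ Icc ((k : ℝ) - 1) (k : ℝ),
      v t ≤ abar * v ((k : ℝ) - 1) + abar * N * δ * ∫ τ in ((k : ℝ) - 1)..t, v (τ - 1))
    (hbase : ∀ t ∈ Icc (0 : ℝ) 1,
      v t ≤ abar * v 0 + abar * N * δ * ∫ τ in (0 : ℝ)..1, v (τ - 1)) :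
    ∀ k : ℕ, 1 ≤ k → k ≤ N + 2 → ∀ t ∈ Icc ((k : ℝ) - 1) (k : ℝ),
      v t ≤ abar ^ k * (1 + N * δ) ^ (k - 1) * v 0 +
        abar ^ k * N * δ * (1 + N * δ) ^ (k - 1) * ∫ τ in (0 : ℝ)..1, v (τ - 1) := by
  set I : ℝ := ∫ τ in (0 : ℝ)..1, v (τ - 1) with hI
  have hI0 : 0 ≤ I := intervalIntegral.integral_nonneg (by norm_num) (fun x _ => hv0 _)
  have habar0 : 0 < abar := lt_of_lt_of_le one_pos habar
  have hNδ : 0 ≤ (N : ℝ) * δ := mul_nonneg (Nat.cast_nonneg N) hδ.le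
  have h1Nδ : (1 : ℝ) ≤ 1 + N * δ := by linarith
  intro k hk1
  induction k, hk1 using Nat.le_induction with
  | base =>
    intro _ t ht
    simpa using hbase t (by simpa using ht)
  | succ k hk IH =>
    intro hkN t ht
    have hkN' : k ≤ N + 2 := by omega
    have IH' := IH hkN'
    set C : ℝ := abar ^ k * (1 + N * δ) ^ (k - 1) * v 0 +
        abar ^ k * N * δ * (1 + N * δ) ^ (k - 1) * I with hC
    have hC0 : 0 ≤ C := by
      have h1 : 0 ≤ abar ^ k := pow_nonneg habar0.le k
      have h2 : 0 ≤ (1 + (N : ℝ) * δ) ^ (k - 1) := pow_nonneg (by linarith) _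
      have := hv0 0
      positivity
    have hcast : ((k + 1 : ℕ) : ℝ) - 1 = (k : ℝ) := by push_cast; ring
    have ht' : t ∈ Icc (k : ℝ) ((k : ℝ) + 1) := by
      rw [hcast] at ht; convert ht using 2; push_cast; ring
    have hrec' := hrec (k + 1) (by omega) hkN t (by rw [hcast]; push_cast; exact ⟨ht'.1, by linarith [ht'.2]⟩)
    rw [hcast] at hrec'
    -- bound the integral
    have hbd : (∫ τ in (k : ℝ)..t, v (τ - 1)) ≤ (t - k) * C := by
      have hle : (k : ℝ) ≤ t := ht'.1
      have hint1 : IntervalIntegrable (fun τ => v (τ - 1)) MeasureTheory.volume (k : ℝ) t :=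
        (hv.comp (continuous_id.sub continuous_const)).intervalIntegrable _ _
      have hint2 : IntervalIntegrable (fun _ : ℝ => C) MeasureTheory.volume (k : ℝ) t :=
        intervalIntegrable_const
      have := intervalIntegral.integral_mono_on hle hint1 hint2 (fun x hx => by
        have hx1 : (k : ℝ) - 1 ≤ x - 1 := by linarith [hx.1]
        have hx2 : x - 1 ≤ (k : ℝ) := by linarith [hx.2, ht'.2]
        exact IH' (x - 1) ⟨hx1, hx2⟩)
      rwa [intervalIntegral.integral_const, smul_eq_mul] at this
    have hvk : v (k : ℝ) ≤ C := IH' (k : ℝ) ⟨by linarith, le_refl _⟩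
    have hJ : (∫ τ in (k : ℝ)..t, v (τ - 1)) ≤ C := by
      have : (t - k) * C ≤ 1 * C := by
        apply mul_le_mul_of_nonneg_right _ hC0
        linarith [ht'.2]
      linarith
    have key : v t ≤ abar * C + abar * N * δ * C := by
      calc v t ≤ abar * v (k : ℝ) + abar * N * δ * (∫ τ in (k : ℝ)..t, v (τ - 1)) := hrec'
        _ ≤ abar * C + abar * N * δ * C :=
            add_le_add (mul_le_mul_of_nonneg_left hvk habar0.le)
              (mul_le_mul_of_nonneg_left hJ
                (mul_nonneg (mul_nonneg habar0.le (Nat.cast_nonneg N)) hδ.le))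
    -- rewrite the target constant
    obtain ⟨m, rfl⟩ : ∃ m, k = m + 1 := ⟨k - 1, by omega⟩
    have hsub1 : m + 1 + 1 - 1 = m + 1 := rfl
    have hsub2 : m + 1 - 1 = m := rfl
    rw [hsub1]
    have hCeq : abar ^ (m + 1 + 1) * (1 + ↑N * δ) ^ (m + 1) * v 0 +
        abar ^ (m + 1 + 1) * ↑N * δ * (1 + ↑N * δ) ^ (m + 1) * I
        = abar * C + abar * N * δ * C := by
      rw [hC, hsub2]; ring
    rw [hCeq]
    exact key
end

section
/- Let u : [−1, ∞) → ℝ^N solve u'(t) = A(t)u(t) + B(t)u(t−1) for t ≥ 0 with continuous matrix-valued A, B, where A has nonnegative off-diagonal entries and B has all entries nonnegative. If u(τ) ≥ 0 (coordinatewise) for all τ ∈ [−1,0], then u(t) ≥ 0 for all t ≥ 0. -/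
open Set Filter Topology


lemma core_pos (N : ℕ) (A : ℝ → Matrix (Fin N) (Fin N) ℝ) (hA : Continuous A)
    (hMetzler : ∀ (t : ℝ) (i j : Fin N), i ≠ j → 0 ≤ A t i j)
    (a b : ℝ) (hab : a ≤ b)
    (u : ℝ → Fin N → ℝ) (hu : Continuous u)
    (f : ℝ → Fin N → ℝ)
    (hf : ∀ t ∈ Icc a b, ∀ i, 0 ≤ f t i)
    (hderiv : ∀ t ∈ Icc a b, ∀ i : Fin N,
      HasDerivAt (fun s => u s i) ((A t).mulVec (u t) i + f t i) t)
    (h0 : ∀ i, 0 ≤ u a i) :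
    ∀ t ∈ Icc a b, ∀ i, 0 ≤ u t i := by
  -- continuity of entries
  have hAij : ∀ i j : Fin N, Continuous fun t => A t i j := fun i j =>
    (continuous_apply j).comp ((continuous_apply i).comp hA)
  have hui : ∀ i : Fin N, Continuous fun t => u t i := fun i =>
    (continuous_apply i).comp hu
  -- bound on row sums of |A|
  set F : ℝ → ℝ := fun t => ∑ i : Fin N, ∑ j : Fin N, |A t i j| with hF
  have hFc : Continuous F := by
    apply continuous_finset_sum
    intro i _
    apply continuous_finset_sum
    intro j _
    exact (hAij i j).abs
  obtain ⟨x, hx, hxmax⟩ := isCompact_Icc.exists_isMaxOn (nonempty_Icc.2 hab) hFc.continuousOn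
  set C : ℝ := F x with hC
  have hC0 : 0 ≤ C := Finset.sum_nonneg fun i _ => Finset.sum_nonneg fun j _ => abs_nonneg _
  set K : ℝ := C + 1 with hK
  have hK0 : 0 < K := by positivity
  have hrow : ∀ t ∈ Icc a b, ∀ i : Fin N, ∑ j : Fin N, |A t i j| ≤ C := by
    intro t ht i
    calc ∑ j : Fin N, |A t i j| ≤ F t := by
          apply Finset.single_le_sum (f := fun i => ∑ j : Fin N, |A t i j|)
          · intro k _; exact Finset.sum_nonneg fun j _ => abs_nonneg _
          · exact Finset.mem_univ i
      _ ≤ C := hxmax ht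
  -- main claim with ε
  have main : ∀ ε : ℝ, 0 < ε → ∀ t ∈ Icc a b, ∀ i : Fin N,
      -(ε * Real.exp (K * (t - a))) < u t i := by
    intro ε hε
    have hbar : Continuous fun t : ℝ => ε * Real.exp (K * (t - a)) :=
      continuous_const.mul (Real.continuous_exp.comp (continuous_const.mul (continuous_id.sub continuous_const)))
    by_contra hcon
    push_neg at hcon
    obtain ⟨t₁, ht₁, i₁, hi₁⟩ := hcon
    set S : Set ℝ := Icc a b ∩ ⋃ i : Fin N, {t | u t i ≤ -(ε * Real.exp (K * (t - a)))} with hS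
    have hSclosed : IsClosed S := by
      apply IsClosed.inter isClosed_Icc
      apply isClosed_iUnion_of_finite
      intro i
      exact isClosed_le (hui i) hbar.neg
    have hSne : S.Nonempty := ⟨t₁, ht₁, mem_iUnion.2 ⟨i₁, hi₁⟩⟩
    have hSbdd : BddBelow S := ⟨a, fun t ht => ht.1.1⟩
    set t₀ : ℝ := sInf S with ht₀def
    have ht₀S : t₀ ∈ S := hSclosed.csInf_mem hSne hSbdd
    have ht₀ : t₀ ∈ Icc a b := ht₀S.1
    obtain ⟨i, hi⟩ := mem_iUnion.1 ht₀S.2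
    have hat₀ : a < t₀ := by
      rcases lt_or_eq_of_le ht₀.1 with h | h
      · exact h
      · exfalso
        have := hi
        rw [← h] at this
        simp only [mem_setOf_eq, sub_self, mul_zero, Real.exp_zero, mul_one] at this
        have := lt_of_lt_of_le (neg_neg_iff_pos.2 hε) (h0 i)
        linarith [this, (h ▸ hi : u a i ≤ -(ε * Real.exp (K * (a - a)))),
          (by simp : -(ε * Real.exp (K * (a - a))) = -ε)]
    -- before t₀, all coordinates are strictly above the barrier
    have hbefore : ∀ t ∈ Ico a t₀, ∀ j : Fin N,
        -(ε * Real.exp (K * (t - a))) < u t j := by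
      intro t ht j
      by_contra h
      push_neg at h
      have htS : t ∈ S := ⟨⟨ht.1, ht.2.le.trans ht₀.2⟩, mem_iUnion.2 ⟨j, h⟩⟩
      exact absurd (csInf_le hSbdd htS) (not_le.2 ht.2)
    -- at t₀ all coordinates are ≥ barrier (by continuity)
    have hlimge : ∀ j : Fin N, -(ε * Real.exp (K * (t₀ - a))) ≤ u t₀ j := by
      intro j
      have hcont : Tendsto (fun t => u t j + ε * Real.exp (K * (t - a))) (𝓝[<] t₀)
          (𝓝 (u t₀ j + ε * Real.exp (K * (t₀ - a)))) :=
        (((hui j).add hbar).tendsto t₀).mono_left nhdsWithin_le_nhds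
      have hev : ∀ᶠ t in 𝓝[<] t₀, 0 ≤ u t j + ε * Real.exp (K * (t - a)) := by
        filter_upwards [Ioo_mem_nhdsLT_of_mem ⟨hat₀, le_refl t₀⟩] with t ht
        linarith [hbefore t ⟨ht.1.le, ht.2⟩ j]
      linarith [ge_of_tendsto hcont hev]
    have hieq : u t₀ i = -(ε * Real.exp (K * (t₀ - a))) := le_antisymm hi (hlimge i)
    -- the derivative at t₀
    set E : ℝ := Real.exp (K * (t₀ - a)) with hE
    have hE0 : 0 < E := Real.exp_pos _
    set d : ℝ := (A t₀).mulVec (u t₀) i + f t₀ i + ε * (Real.exp (K * (t₀ - a)) * K) with hd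
    have hgd : HasDerivAt (fun t => u t i + ε * Real.exp (K * (t - a))) d t₀ := by
      apply (hderiv t₀ ht₀ i).add
      have h1 : HasDerivAt (fun t : ℝ => K * (t - a)) K t₀ := by
        simpa using ((hasDerivAt_id t₀).sub_const a).const_mul K
      exact (h1.exp).const_mul ε
    -- derivative is ≤ 0 (left minimum)
    have hdle : d ≤ 0 := by
      have hslope : Tendsto (slope (fun t => u t i + ε * Real.exp (K * (t - a))) t₀)
          (𝓝[<] t₀) (𝓝 d) :=
        (hasDerivAt_iff_tendsto_slope.1 hgd).mono_left
          (nhdsWithin_mono _ fun t ht => ne_of_lt ht)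
      refine le_of_tendsto hslope ?_
      filter_upwards [Ioo_mem_nhdsLT_of_mem ⟨hat₀, le_refl t₀⟩] with t ht
      have hgt : 0 < u t i + ε * Real.exp (K * (t - a)) := by
        linarith [hbefore t ⟨ht.1.le, ht.2⟩ i]
      have hg0 : u t₀ i + ε * Real.exp (K * (t₀ - a)) = 0 := by rw [hieq]; ring
      rw [slope_def_field]
      rw [div_nonpos_iff]
      left
      constructor
      · rw [hg0]; linarith
      · linarith [ht.2]
    -- derivative is > 0: contradiction
    have hdge : 0 < d := by
      have hmv : -(C * (ε * E)) ≤ (A t₀).mulVec (u t₀) i := by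
        have : ∀ j : Fin N, -(|A t₀ i j| * (ε * E)) ≤ A t₀ i j * u t₀ j := by
          intro j
          rcases eq_or_ne j i with h | hj
          · rw [h, hieq]
            nlinarith [le_abs_self (A t₀ i i), mul_pos hε hE0]
          · have hAij0 : 0 ≤ A t₀ i j := hMetzler t₀ i j (Ne.symm hj)
            have := hlimge j
            rw [abs_of_nonneg hAij0]
            nlinarith
        calc -(C * (ε * E)) ≤ -((∑ j : Fin N, |A t₀ i j|) * (ε * E)) := by
              have := hrow t₀ ht₀ i
              nlinarith [mul_pos hε hE0]
          _ = ∑ j : Fin N, -(|A t₀ i j| * (ε * E)) := by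
              rw [Finset.sum_mul, ← Finset.sum_neg_distrib]
          _ ≤ ∑ j : Fin N, A t₀ i j * u t₀ j := Finset.sum_le_sum fun j _ => this j
          _ = (A t₀).mulVec (u t₀) i := by
              simp [Matrix.mulVec, dotProduct]
      have hf0 : 0 ≤ f t₀ i := hf t₀ ht₀ i
      have : ε * (Real.exp (K * (t₀ - a)) * K) = ε * E * (C + 1) := by
        rw [hE, hK]; ring
      rw [hd, this]
      nlinarith [mul_pos hε hE0]
    linarith
  -- take ε → 0
  intro t ht i
  by_contra h
  push_neg at h
  set ε : ℝ := -u t i / Real.exp (K * (t - a)) with hε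
  have hεpos : 0 < ε := div_pos (neg_pos.2 h) (Real.exp_pos _)
  have := main ε hεpos t ht i
  rw [hε, div_mul_cancel₀] at this
  · linarith
  · exact (Real.exp_pos _).ne'

theorem stmt14 (N : ℕ) (A B : ℝ → Matrix (Fin N) (Fin N) ℝ)
    (hA : Continuous A) (hB : Continuous B)
    (hMetzler : ∀ (t : ℝ) (i j : Fin N), i ≠ j → 0 ≤ A t i j)
    (hBpos : ∀ (t : ℝ) (i j : Fin N), 0 ≤ B t i j)
    (u : ℝ → Fin N → ℝ) (hu : Continuous u)
    (hderiv : ∀ t : ℝ, 0 ≤ t → ∀ i : Fin N,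
      HasDerivAt (fun s => u s i) ((A t).mulVec (u t) i + (B t).mulVec (u (t - 1)) i) t)
    (hinit : ∀ τ ∈ Icc (-1 : ℝ) 0, ∀ i : Fin N, 0 ≤ u τ i) :
    ∀ t : ℝ, 0 ≤ t → ∀ i : Fin N, 0 ≤ u t i := by
  have Q : ∀ n : ℕ, ∀ t ∈ Icc (-1 : ℝ) (n : ℝ), ∀ i : Fin N, 0 ≤ u t i := by
    intro n
    induction n with
    | zero => simpa using hinit
    | succ n ih =>
      intro t ht i
      rcases le_or_gt t (n : ℝ) with h | h
      · exact ih t ⟨ht.1, h⟩ i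
      · have hn0 : (0 : ℝ) ≤ (n : ℝ) := Nat.cast_nonneg n
        have htIcc : t ∈ Icc (n : ℝ) ((n : ℝ) + 1) := by
          constructor
          · exact h.le
          · have := ht.2; push_cast at this ⊢; linarith
        refine core_pos N A hA hMetzler (n : ℝ) ((n : ℝ) + 1) (by linarith)
          u hu (fun s => (B s).mulVec (u (s - 1))) ?_ ?_ ?_ t htIcc i
        · intro s hs j
          have hus : ∀ k : Fin N, 0 ≤ u (s - 1) k := by
            intro k
            refine ih (s - 1) ⟨?_, ?_⟩ k
            · linarith [hs.1]
            · linarith [hs.2]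
          simp only [Matrix.mulVec, dotProduct]
          exact Finset.sum_nonneg fun k _ => mul_nonneg (hBpos s j k) (hus k)
        · intro s hs j
          exact hderiv s (le_trans hn0 hs.1) j
        · exact fun j => ih (n : ℝ) ⟨by linarith, le_refl _⟩ j
  intro t ht i
  exact Q ⌈t⌉₊ t ⟨by linarith, Nat.le_ceil t⟩ i
end
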